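/- arXiv:1604.04567 — 11 statements merged into one kernel-verified Lean document; each statement's English description precedes it below -/
import Mathlib

section
/- Let μ ∈ (0,1), P > 0, and s₀ > s₁ > 0, and define the mode-1 objective f(α) = (1−μ)·log₂((1+P s₀)/(1+α P s₀)) + μ·log₂((1+P s₁)/(1+α P s₁)) + log₂(1+α P s₁). Then f is strictly decreasing on [0,1]; in particular f attains its maximum on [0,1] uniquely at α = 0. -/
lemma mode1_key (μ P s₀ s₁ : ℝ) (hμ1 : μ < 1) (hP : 0 < P)
    (hs₁ : 0 < s₁) (hs : s₁ < s₀) {a b : ℝ} (ha : 0 ≤ a) (hab : a < b) :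
    (1 - μ) * Real.logb 2 ((1 + P * s₀) / (1 + b * P * s₀))
      + μ * Real.logb 2 ((1 + P * s₁) / (1 + b * P * s₁))
      + Real.logb 2 (1 + b * P * s₁)
    < (1 - μ) * Real.logb 2 ((1 + P * s₀) / (1 + a * P * s₀))
      + μ * Real.logb 2 ((1 + P * s₁) / (1 + a * P * s₁))
      + Real.logb 2 (1 + a * P * s₁) := by
  have hb : 0 < b := lt_of_le_of_lt ha hab
  have hs₀ : 0 < s₀ := hs₁.trans hs
  have hA0 : (0:ℝ) < 1 + a * P * s₀ := by positivity
  have hA1 : (0:ℝ) < 1 + a * P * s₁ := by positivity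
  have hB0 : (0:ℝ) < 1 + b * P * s₀ := by positivity
  have hB1 : (0:ℝ) < 1 + b * P * s₁ := by positivity
  have hC0 : (0:ℝ) < 1 + P * s₀ := by positivity
  have hC1 : (0:ℝ) < 1 + P * s₁ := by positivity
  have hkey : Real.logb 2 ((1 + b * P * s₁) * (1 + a * P * s₀))
      < Real.logb 2 ((1 + b * P * s₀) * (1 + a * P * s₁)) := by
    apply Real.logb_lt_logb one_lt_two (by positivity)
    nlinarith [mul_pos hP (mul_pos (sub_pos.2 hab) (sub_pos.2 hs))]
  rw [Real.logb_mul hB1.ne' hA0.ne', Real.logb_mul hB0.ne' hA1.ne'] at hkey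
  rw [Real.logb_div hC0.ne' hA0.ne', Real.logb_div hC1.ne' hA1.ne',
    Real.logb_div hC0.ne' hB0.ne', Real.logb_div hC1.ne' hB1.ne']
  nlinarith [mul_pos (sub_pos.2 hμ1)
    (sub_pos.2 (show Real.logb 2 (1 + b * P * s₁) + Real.logb 2 (1 + a * P * s₀)
      < Real.logb 2 (1 + b * P * s₀) + Real.logb 2 (1 + a * P * s₁) from hkey))]

/-- For `μ ∈ (0,1)`, `P > 0` and `s₀ > s₁ > 0`, the mode-1 Lagrangian objective
`f(α) = (1−μ)·log₂((1+P s₀)/(1+α P s₀)) + μ·log₂((1+P s₁)/(1+α P s₁)) + log₂(1+α P s₁)`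
is strictly decreasing on `[0,1]`; in particular its maximum on `[0,1]` is
attained uniquely at `α = 0`. -/
theorem mode1_objective_strictAntiOn
    (μ P s₀ s₁ : ℝ) (hμ : μ ∈ Set.Ioo (0:ℝ) 1) (hP : 0 < P)
    (hs₁ : 0 < s₁) (hs : s₁ < s₀) :
    StrictAntiOn
      (fun a : ℝ =>
        (1 - μ) * Real.logb 2 ((1 + P * s₀) / (1 + a * P * s₀))
          + μ * Real.logb 2 ((1 + P * s₁) / (1 + a * P * s₁))
          + Real.logb 2 (1 + a * P * s₁)) (Set.Icc 0 1)
    ∧ ∀ α ∈ Set.Icc (0:ℝ) 1, α ≠ 0 →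
        (1 - μ) * Real.logb 2 ((1 + P * s₀) / (1 + α * P * s₀))
          + μ * Real.logb 2 ((1 + P * s₁) / (1 + α * P * s₁))
          + Real.logb 2 (1 + α * P * s₁)
        < (1 - μ) * Real.logb 2 ((1 + P * s₀) / (1 + 0 * P * s₀))
          + μ * Real.logb 2 ((1 + P * s₁) / (1 + 0 * P * s₁))
          + Real.logb 2 (1 + 0 * P * s₁) := by
  constructor
  · intro a haI b _ hab
    exact mode1_key μ P s₀ s₁ hμ.2 hP hs₁ hs haI.1 hab
  · intro α hα hα0
    exact mode1_key μ P s₀ s₁ hμ.2 hP hs₁ hs le_rfl (lt_of_le_of_ne hα.1 (Ne.symm hα0))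
end

section
/- Let μ ∈ (0,1), P > 0, and 0 < s₀ < s₁, and define the mode-1 objective f(α) = (1−μ)·log₂((1+P s₀)/(1+α P s₀)) + μ·log₂((1+P s₁)/(1+α P s₁)) + log₂(1+α P s₁). Then f is strictly increasing on [0,1]; in particular f attains its maximum on [0,1] uniquely at α = 1. -/
/-- For `μ ∈ (0,1)`, `P > 0` and `0 < s₀ < s₁`, the mode-1 Lagrangian objective
`f(α) = (1−μ)·log₂((1+P s₀)/(1+α P s₀)) + μ·log₂((1+P s₁)/(1+α P s₁)) + log₂(1+α P s₁)`
is strictly increasing on `[0,1]`; in particular its maximum on `[0,1]` is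
attained uniquely at `α = 1`. -/
theorem mode1_objective_strictMonoOn
    (μ P s₀ s₁ : ℝ) (hμ : μ ∈ Set.Ioo (0:ℝ) 1) (hP : 0 < P)
    (hs₀ : 0 < s₀) (hs : s₀ < s₁) :
    StrictMonoOn
      (fun a : ℝ =>
        (1 - μ) * Real.logb 2 ((1 + P * s₀) / (1 + a * P * s₀))
          + μ * Real.logb 2 ((1 + P * s₁) / (1 + a * P * s₁))
          + Real.logb 2 (1 + a * P * s₁)) (Set.Icc 0 1)
    ∧ ∀ α ∈ Set.Icc (0:ℝ) 1, α ≠ 1 →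
        (1 - μ) * Real.logb 2 ((1 + P * s₀) / (1 + α * P * s₀))
          + μ * Real.logb 2 ((1 + P * s₁) / (1 + α * P * s₁))
          + Real.logb 2 (1 + α * P * s₁)
        < (1 - μ) * Real.logb 2 ((1 + P * s₀) / (1 + 1 * P * s₀))
          + μ * Real.logb 2 ((1 + P * s₁) / (1 + 1 * P * s₁))
          + Real.logb 2 (1 + 1 * P * s₁) := by
  have hs₁ : 0 < s₁ := hs₀.trans hs
  have hmono : StrictMonoOn
      (fun a : ℝ =>
        (1 - μ) * Real.logb 2 ((1 + P * s₀) / (1 + a * P * s₀))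
          + μ * Real.logb 2 ((1 + P * s₁) / (1 + a * P * s₁))
          + Real.logb 2 (1 + a * P * s₁)) (Set.Icc 0 1) := by
    intro x hx y hy hxy
    obtain ⟨hx0, _⟩ := hx
    obtain ⟨hy0, _⟩ := hy
    have px0 : (0:ℝ) < 1 + x * P * s₀ := by positivity
    have px1 : (0:ℝ) < 1 + x * P * s₁ := by positivity
    have py0 : (0:ℝ) < 1 + y * P * s₀ := by positivity
    have py1 : (0:ℝ) < 1 + y * P * s₁ := by positivity
    simp only
    rw [Real.logb_div (by positivity) px0.ne', Real.logb_div (by positivity) px1.ne',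
        Real.logb_div (by positivity) py0.ne', Real.logb_div (by positivity) py1.ne']
    have key : Real.logb 2 (1 + y * P * s₁) - Real.logb 2 (1 + x * P * s₁)
        > Real.logb 2 (1 + y * P * s₀) - Real.logb 2 (1 + x * P * s₀) := by
      rw [← Real.logb_div py1.ne' px1.ne', ← Real.logb_div py0.ne' px0.ne']
      apply Real.logb_lt_logb one_lt_two (by positivity)
      rw [div_lt_div_iff₀ px0 px1]
      nlinarith [mul_pos (sub_pos.mpr hxy) (sub_pos.mpr hs), hP, hx0]
    nlinarith [key, hμ.2]
  refine ⟨hmono, fun α hα hne => ?_⟩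
  exact hmono hα (Set.right_mem_Icc.mpr zero_le_one) (lt_of_le_of_ne hα.2 hne)
end

section
/- Let μ ∈ (0,1), x, y > 0, and β ∈ [0,1], and define g_β(α) = (1−μ)·log₂(1+(1−α)x+(1−β)y) + μ·log₂(1+x+y+2√(αβxy)) for α ∈ [0,1]. Then g_β is strictly concave on [0,1]. -/
/-- For `μ ∈ (0,1)`, `x, y > 0` and `β ∈ [0,1]`, the mode-3 Lagrangian objective
`g_β(α) = (1−μ)·log₂(1+(1−α)x+(1−β)y) + μ·log₂(1+x+y+2√(αβxy))`
is strictly concave on `[0,1]`. -/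
theorem mode3_objective_strictConcaveOn
    (μ x y β : ℝ) (hμ : μ ∈ Set.Ioo (0:ℝ) 1) (hx : 0 < x) (hy : 0 < y)
    (hβ : β ∈ Set.Icc (0:ℝ) 1) :
    StrictConcaveOn ℝ (Set.Icc (0:ℝ) 1)
      (fun a : ℝ =>
        (1 - μ) * Real.logb 2 (1 + (1 - a) * x + (1 - β) * y)
          + μ * Real.logb 2 (1 + x + y + 2 * Real.sqrt (a * β * x * y))) := by
  obtain ⟨hμ0, hμ1⟩ := hμ
  obtain ⟨hβ0, hβ1⟩ := hβ
  set L : ℝ → ℝ := fun a => 1 + (1 - a) * x + (1 - β) * y with hLdef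
  set M : ℝ → ℝ := fun a => 1 + x + y + 2 * Real.sqrt (a * β * x * y) with hMdef
  have hLpos : ∀ a ∈ Set.Icc (0:ℝ) 1, 0 < L a := by
    intro a ha
    have h1 : 0 ≤ (1 - a) * x := mul_nonneg (by linarith [ha.2]) hx.le
    have h2 : 0 ≤ (1 - β) * y := mul_nonneg (by linarith) hy.le
    simp only [hLdef]; linarith
  have hMge : ∀ a : ℝ, 1 + x + y ≤ M a := by
    intro a
    have h1 : 0 ≤ Real.sqrt (a * β * x * y) := Real.sqrt_nonneg _
    simp only [hMdef]; linarith
  have hMpos : ∀ a : ℝ, 0 < M a := fun a => lt_of_lt_of_le (by linarith) (hMge a)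
  refine ⟨convex_Icc 0 1, fun p hp q hq hpq s t hs ht hst => ?_⟩
  simp only [smul_eq_mul]
  set z : ℝ := s * p + t * q with hzdef
  have hz : z ∈ Set.Icc (0:ℝ) 1 :=
    (convex_Icc (0:ℝ) 1) hp hq hs.le ht.le hst
  -- first term: strict concavity
  have hLz : s * L p + t * L q = L z := by
    simp only [hLdef, hzdef]
    linear_combination (1 + x + (1 - β) * y) * hst
  have hLne : L p ≠ L q := by
    simp only [hLdef]
    intro h
    exact hpq (by nlinarith [h])
  have h1 : s * Real.log (L p) + t * Real.log (L q) < Real.log (L z) := by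
    have := strictConcaveOn_log_Ioi.2 (Set.mem_Ioi.2 (hLpos p hp))
      (Set.mem_Ioi.2 (hLpos q hq)) hLne hs ht hst
    simpa [smul_eq_mul, hLz] using this
  -- second term: concavity
  have hsq : s * Real.sqrt (p * β * x * y) + t * Real.sqrt (q * β * x * y)
      ≤ Real.sqrt (z * β * x * y) := by
    have hpm : (p * β * x * y) ∈ Set.Ici (0:ℝ) :=
      mul_nonneg (mul_nonneg (mul_nonneg hp.1 hβ0) hx.le) hy.le
    have hqm : (q * β * x * y) ∈ Set.Ici (0:ℝ) :=
      mul_nonneg (mul_nonneg (mul_nonneg hq.1 hβ0) hx.le) hy.le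
    have := Real.strictConcaveOn_sqrt.concaveOn.2 hpm hqm hs.le ht.le hst
    have heq : s • (p * β * x * y) + t • (q * β * x * y) = z * β * x * y := by
      simp only [smul_eq_mul, hzdef]; ring
    rw [heq] at this
    simpa [smul_eq_mul] using this
  have hMz : s * M p + t * M q ≤ M z := by
    simp only [hMdef]
    nlinarith [hsq, hst]
  have hcomb : 0 < s * M p + t * M q := by
    nlinarith [hMge p, hMge q, hst, hs, ht, hx, hy]
  have h2 : s * Real.log (M p) + t * Real.log (M q) ≤ Real.log (M z) := by
    have hlog1 : Real.log (s * M p + t * M q) ≤ Real.log (M z) :=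
      Real.log_le_log hcomb hMz
    have hlog2 : s * Real.log (M p) + t * Real.log (M q)
        ≤ Real.log (s * M p + t * M q) := by
      have := strictConcaveOn_log_Ioi.concaveOn.2 (Set.mem_Ioi.2 (hMpos p))
        (Set.mem_Ioi.2 (hMpos q)) hs.le ht.le hst
      simpa [smul_eq_mul] using this
    linarith
  -- combine
  have hlog2pos : 0 < Real.log 2 := Real.log_pos (by norm_num)
  simp only [Real.logb, div_eq_mul_inv]
  have hc : 0 < (Real.log 2)⁻¹ := inv_pos.2 hlog2pos
  have hA : 0 < (1 - μ) * (Real.log 2)⁻¹ *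
      (Real.log (L z) - (s * Real.log (L p) + t * Real.log (L q))) := by
    apply mul_pos (mul_pos (by linarith) hc); linarith
  have hB : 0 ≤ μ * (Real.log 2)⁻¹ *
      (Real.log (M z) - (s * Real.log (M p) + t * Real.log (M q))) := by
    apply mul_nonneg (mul_nonneg hμ0.le hc.le); linarith
  simp only [hLdef, hMdef, hzdef] at hA hB ⊢
  nlinarith [hA, hB]
end

section
/- Let μ ∈ (0,1) and x, y > 0 satisfy both μ·√(y/x) ≥ (1−μ)·(1+(√x+√y)²) and μ·√(x/y) ≥ (1−μ)·(1+(√x+√y)²), and define G(α,β) = (1−μ)·log₂(1+(1−α)x+(1−β)y) + μ·log₂(1+x+y+2√(αβxy)). Then G(α,β) ≤ G(1,1) for all (α,β) ∈ [0,1]²; i.e., allocating all power to the cooperative messages maximizes G. -/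
set_option maxHeartbeats 1000000


/-- On the fading region `K₂`, i.e. when
`μ·√(y/x) ≥ (1−μ)·(1+(√x+√y)²)` and `μ·√(x/y) ≥ (1−μ)·(1+(√x+√y)²)`,
full cooperative power allocation `(α,β) = (1,1)` maximizes the mode-3
Lagrangian objective
`G(α,β) = (1−μ)·log₂(1+(1−α)x+(1−β)y) + μ·log₂(1+x+y+2√(αβxy))` over `[0,1]²`. -/
theorem mode3_full_cooperation_optimal_on_K2
    (μ x y : ℝ) (hμ : μ ∈ Set.Ioo (0:ℝ) 1) (hx : 0 < x) (hy : 0 < y)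
    (h₁ : μ * Real.sqrt (y / x) ≥ (1 - μ) * (1 + (Real.sqrt x + Real.sqrt y) ^ 2))
    (h₂ : μ * Real.sqrt (x / y) ≥ (1 - μ) * (1 + (Real.sqrt x + Real.sqrt y) ^ 2)) :
    ∀ α ∈ Set.Icc (0:ℝ) 1, ∀ β ∈ Set.Icc (0:ℝ) 1,
      (1 - μ) * Real.logb 2 (1 + (1 - α) * x + (1 - β) * y)
          + μ * Real.logb 2 (1 + x + y + 2 * Real.sqrt (α * β * x * y))
        ≤ (1 - μ) * Real.logb 2 (1 + (1 - (1:ℝ)) * x + (1 - (1:ℝ)) * y)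
          + μ * Real.logb 2 (1 + x + y + 2 * Real.sqrt ((1:ℝ) * (1:ℝ) * x * y)) := by
  obtain ⟨hμ0, hμ1⟩ := hμ
  intro α hα β hβ
  obtain ⟨hα0, hα1⟩ := hα
  obtain ⟨hβ0, hβ1⟩ := hβ
  have ha0 : 0 < Real.sqrt x := Real.sqrt_pos.mpr hx
  have hb0 : 0 < Real.sqrt y := Real.sqrt_pos.mpr hy
  set a : ℝ := Real.sqrt x with ha
  set b : ℝ := Real.sqrt y with hb
  have ha2 : a ^ 2 = x := Real.sq_sqrt hx.le
  have hb2 : b ^ 2 = y := Real.sq_sqrt hy.le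
  have h11 : Real.sqrt ((1:ℝ) * 1 * x * y) = a * b := by
    rw [one_mul, one_mul]; exact Real.sqrt_mul hx.le y
  have habnn : 0 ≤ α * β := mul_nonneg hα0 hβ0
  have hab : Real.sqrt (α * β * x * y) = Real.sqrt (α * β) * (a * b) := by
    rw [show α * β * x * y = (α * β) * (x * y) by ring, Real.sqrt_mul habnn,
      Real.sqrt_mul hx.le]
  set t : ℝ := Real.sqrt (α * β) with htdef
  have ht0 : 0 ≤ t := Real.sqrt_nonneg _
  have htab : t = Real.sqrt α * Real.sqrt β := Real.sqrt_mul hα0 β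
  have h2t : 2 * t ≤ α + β := by
    have h1 := sq_nonneg (Real.sqrt α - Real.sqrt β)
    have h2 := Real.sq_sqrt hα0
    have h3 := Real.sq_sqrt hβ0
    rw [htab]; nlinarith
  have ht1 : t ≤ 1 := by linarith
  -- key hypotheses rewritten
  have hsqyx : Real.sqrt (y / x) = b / a := by
    rw [ha, hb, ← Real.sqrt_div hy.le]
  have hsqxy : Real.sqrt (x / y) = a / b := by
    rw [ha, hb, ← Real.sqrt_div hx.le]
  set S₁ : ℝ := 1 + x + y + 2 * (a * b) with hS₁def
  have hS₁eq : S₁ = 1 + (a + b) ^ 2 := by rw [hS₁def, ← ha2, ← hb2]; ring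
  have hS₁pos : 0 < S₁ := by nlinarith [mul_pos ha0 hb0]
  have key1 : (1 - μ) * S₁ * x ≤ μ * (a * b) := by
    rw [hsqyx] at h₁
    have := mul_le_mul_of_nonneg_right h₁ hx.le
    have hba : b / a * x = a * b := by rw [← ha2]; field_simp
    rw [hS₁eq]
    calc (1 - μ) * (1 + (a + b) ^ 2) * x ≤ μ * (b / a) * x := by linarith
      _ = μ * (a * b) := by rw [mul_assoc, hba]
  have key2 : (1 - μ) * S₁ * y ≤ μ * (a * b) := by
    rw [hsqxy] at h₂
    have := mul_le_mul_of_nonneg_right h₂ hy.le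
    have hba : a / b * y = a * b := by rw [← hb2]; field_simp
    rw [hS₁eq]
    calc (1 - μ) * (1 + (a + b) ^ 2) * y ≤ μ * (a / b) * y := by linarith
      _ = μ * (a * b) := by rw [mul_assoc, hba]
  set A : ℝ := 1 + (1 - α) * x + (1 - β) * y with hAdef
  have hA1 : 1 ≤ A := by
    have p1 : 0 ≤ (1 - α) * x := mul_nonneg (by linarith) hx.le
    have p2 : 0 ≤ (1 - β) * y := mul_nonneg (by linarith) hy.le
    rw [hAdef]; linarith
  have hApos : 0 < A := by linarith
  set S : ℝ := 1 + x + y + 2 * (t * (a * b)) with hSdef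
  have hSpos : 0 < S := by
    have p1 : 0 ≤ t * (a * b) := mul_nonneg ht0 (mul_pos ha0 hb0).le
    rw [hSdef]; linarith
  have hSS1 : S ≤ S₁ := by
    have p1 : t * (a * b) ≤ 1 * (a * b) :=
      mul_le_mul_of_nonneg_right ht1 (mul_pos ha0 hb0).le
    rw [hSdef, hS₁def]; linarith
  -- core algebraic inequality
  have key : (1 - μ) * (A - 1) * S₁ ≤ μ * (S₁ - S) := by
    have m1 : (1 - α) * ((1 - μ) * S₁ * x) ≤ (1 - α) * (μ * (a * b)) :=
      mul_le_mul_of_nonneg_left key1 (by linarith)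
    have m2 : (1 - β) * ((1 - μ) * S₁ * y) ≤ (1 - β) * (μ * (a * b)) :=
      mul_le_mul_of_nonneg_left key2 (by linarith)
    have m3 : (2 - α - β) * (μ * (a * b)) ≤ 2 * (1 - t) * (μ * (a * b)) := by
      have hnn : 0 ≤ μ * (a * b) := by positivity
      have h' : 2 - α - β ≤ 2 * (1 - t) := by linarith
      exact mul_le_mul_of_nonneg_right h' hnn
    have hAe : A - 1 = (1 - α) * x + (1 - β) * y := by rw [hAdef]; ring
    have hSe : S₁ - S = 2 * (1 - t) * (a * b) := by rw [hS₁def, hSdef]; ring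
    rw [hAe, hSe]
    calc (1 - μ) * ((1 - α) * x + (1 - β) * y) * S₁
        = (1 - α) * ((1 - μ) * S₁ * x) + (1 - β) * ((1 - μ) * S₁ * y) := by ring
      _ ≤ (1 - α) * (μ * (a * b)) + (1 - β) * (μ * (a * b)) := by linarith
      _ = (2 - α - β) * (μ * (a * b)) := by ring
      _ ≤ 2 * (1 - t) * (μ * (a * b)) := m3
      _ = μ * (2 * (1 - t) * (a * b)) := by ring
  clear_value a b t S₁ A S
  -- log bounds
  have e1 : Real.log A ≤ A - 1 := Real.log_le_sub_one_of_pos hApos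
  have e2 : Real.log S - Real.log S₁ ≤ S / S₁ - 1 := by
    have h := Real.log_le_sub_one_of_pos (div_pos hSpos hS₁pos)
    rwa [Real.log_div hSpos.ne' hS₁pos.ne'] at h
  have k2 : (1 - μ) * (A - 1) ≤ μ * (S₁ - S) / S₁ := by
    rw [le_div_iff₀ hS₁pos]; linarith
  have keq : μ * (S₁ - S) / S₁ = μ * (1 - S / S₁) := by field_simp
  have m1 : (1 - μ) * Real.log A ≤ (1 - μ) * (A - 1) :=
    mul_le_mul_of_nonneg_left e1 (by linarith)
  have m2 : μ * (1 - S / S₁) ≤ μ * Real.log S₁ - μ * Real.log S := by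
    have h' : μ * (1 - S / S₁) ≤ μ * (Real.log S₁ - Real.log S) :=
      mul_le_mul_of_nonneg_left (by linarith) hμ0.le
    rw [mul_sub] at h'
    linarith [h']
  have goal' : (1 - μ) * Real.log A + μ * Real.log S ≤ μ * Real.log S₁ := by
    have := keq ▸ k2
    linarith
  -- assemble
  have hone : (1:ℝ) + (1 - 1) * x + (1 - 1) * y = 1 := by ring
  rw [hone, Real.logb_one, mul_zero, zero_add, h11, hab, ← hSdef, ← hS₁def]
  have hlog2 : 0 < Real.log 2 := Real.log_pos one_lt_two
  simp only [Real.logb]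
  rw [show (1 - μ) * (Real.log A / Real.log 2) + μ * (Real.log S / Real.log 2)
        = ((1 - μ) * Real.log A + μ * Real.log S) / Real.log 2 by ring,
    show μ * (Real.log S₁ / Real.log 2) = (μ * Real.log S₁) / Real.log 2 by ring]
  exact div_le_div_of_nonneg_right goal' hlog2.le
end

section
/- Let μ ∈ (1/2, 1) and x, y > 0, and set α* = (μ−1/2)(1+x+y)/x and β* = (μ−1/2)(1+x+y)/y. Then the two stationarity identities hold: μ·√(β*xy/α*)·(1+(1−α*)x+(1−β*)y) = (1−μ)·x·(1+x+y+2√(α*β*xy)) and μ·√(α*xy/β*)·(1+(1−α*)x+(1−β*)y) = (1−μ)·y·(1+x+y+2√(α*β*xy)). -/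
/-- For `μ ∈ (1/2,1)` and `x, y > 0`, the pair
`α* = (μ−1/2)(1+x+y)/x`, `β* = (μ−1/2)(1+x+y)/y` satisfies the two stationarity
identities of Case 7 of the proof of Theorem 1 (cross-multiplied form of
`∂L/∂α = ∂L/∂ᾱ` and `∂L/∂β = ∂L/∂β̄`). -/
theorem mode3_K1_stationarity_identities
    (μ x y : ℝ) (hμ : μ ∈ Set.Ioo (1/2 : ℝ) 1) (hx : 0 < x) (hy : 0 < y) :
    μ * Real.sqrt ((μ - 1/2) * (1 + x + y) / y * x * y / ((μ - 1/2) * (1 + x + y) / x)) *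
        (1 + (1 - (μ - 1/2) * (1 + x + y) / x) * x + (1 - (μ - 1/2) * (1 + x + y) / y) * y)
      = (1 - μ) * x *
        (1 + x + y + 2 * Real.sqrt ((μ - 1/2) * (1 + x + y) / x * ((μ - 1/2) * (1 + x + y) / y) * x * y))
    ∧
    μ * Real.sqrt ((μ - 1/2) * (1 + x + y) / x * x * y / ((μ - 1/2) * (1 + x + y) / y)) *
        (1 + (1 - (μ - 1/2) * (1 + x + y) / x) * x + (1 - (μ - 1/2) * (1 + x + y) / y) * y)
      = (1 - μ) * y *
        (1 + x + y + 2 * Real.sqrt ((μ - 1/2) * (1 + x + y) / x * ((μ - 1/2) * (1 + x + y) / y) * x * y)) := by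
  obtain ⟨hμ1, hμ2⟩ := hμ
  have hc : 0 < μ - 1/2 := by linarith
  have hs : 0 < 1 + x + y := by linarith
  set a := (μ - 1/2) * (1 + x + y) with ha
  have ha0 : a ≠ 0 := by positivity
  have h1 : a / y * x * y / (a / x) = x ^ 2 := by
    field_simp
  have h2 : a / x * x * y / (a / y) = y ^ 2 := by
    field_simp
  have h3 : a / x * (a / y) * x * y = a ^ 2 := by
    field_simp
  rw [h1, h2, h3, Real.sqrt_sq hx.le, Real.sqrt_sq hy.le,
    Real.sqrt_sq (by positivity : (0:ℝ) ≤ a)]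
  constructor <;> · field_simp; rw [ha]; ring
end

section
/- Let μ ∈ (1/2, 1) and x, y > 0 satisfy min{x, y} ≥ (μ−1/2)(1+x+y), and set α* = (μ−1/2)(1+x+y)/x and β* = (μ−1/2)(1+x+y)/y. Define G(α,β) = (1−μ)·log₂(1+(1−α)x+(1−β)y) + μ·log₂(1+x+y+2√(αβxy)). Then (α*,β*) ∈ (0,1]² and G(α,β) ≤ G(α*,β*) for all (α,β) ∈ [0,1]². -/
/-- On the fading region `K₁`, i.e. when `min{x,y} ≥ (μ−1/2)(1+x+y)` with
`μ ∈ (1/2,1)` and `x,y > 0`, the power split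
`α* = (μ−1/2)(1+x+y)/x`, `β* = (μ−1/2)(1+x+y)/y` lies in `(0,1]²` and
globally maximizes the mode-3 Lagrangian objective
`G(α,β) = (1−μ)·log₂(1+(1−α)x+(1−β)y) + μ·log₂(1+x+y+2√(αβxy))` over `[0,1]²`. -/
theorem mode3_K1_optimal_power_sharing
    (μ x y : ℝ) (hμ : μ ∈ Set.Ioo (1/2 : ℝ) 1) (hx : 0 < x) (hy : 0 < y)
    (hK1 : min x y ≥ (μ - 1/2) * (1 + x + y)) :
    ((μ - 1/2) * (1 + x + y) / x ∈ Set.Ioc (0:ℝ) 1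
      ∧ (μ - 1/2) * (1 + x + y) / y ∈ Set.Ioc (0:ℝ) 1)
    ∧ ∀ α ∈ Set.Icc (0:ℝ) 1, ∀ β ∈ Set.Icc (0:ℝ) 1,
        (1 - μ) * Real.logb 2 (1 + (1 - α) * x + (1 - β) * y)
            + μ * Real.logb 2 (1 + x + y + 2 * Real.sqrt (α * β * x * y))
          ≤ (1 - μ) * Real.logb 2 (1 + (1 - (μ - 1/2) * (1 + x + y) / x) * x
                + (1 - (μ - 1/2) * (1 + x + y) / y) * y)
            + μ * Real.logb 2 (1 + x + y + 2 * Real.sqrt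
                ((μ - 1/2) * (1 + x + y) / x * ((μ - 1/2) * (1 + x + y) / y) * x * y)) := by
  obtain ⟨hμ1, hμ2⟩ := hμ
  have hS : (0:ℝ) < 1 + x + y := by linarith
  set c : ℝ := (μ - 1/2) * (1 + x + y) with hc_def
  have hc : 0 < c := mul_pos (by linarith) hS
  have hcx : c ≤ x := le_trans (le_min_iff.mp hK1).1 (le_refl x)
  have hcy : c ≤ y := (le_min_iff.mp hK1).2
  -- simplify the RHS
  have hsq : c / x * (c / y) * x * y = c ^ 2 := by
    field_simp
  have hsqrt : Real.sqrt (c / x * (c / y) * x * y) = c := by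
    rw [hsq, Real.sqrt_sq hc.le]
  have hA : 1 + (1 - c / x) * x + (1 - c / y) * y = 1 + x + y - 2 * c := by
    field_simp; ring
  refine ⟨⟨⟨div_pos hc hx, (div_le_one hx).mpr hcx⟩,
          ⟨div_pos hc hy, (div_le_one hy).mpr hcy⟩⟩, ?_⟩
  intro α hα β hβ
  obtain ⟨hα0, hα1⟩ := hα
  obtain ⟨hβ0, hβ1⟩ := hβ
  rw [hsqrt, hA]
  set t : ℝ := α * x + β * y with ht_def
  have ht0 : 0 ≤ t := by positivity
  have htA : 1 + (1 - α) * x + (1 - β) * y = 1 + x + y - t := by ring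
  have hAt : (0:ℝ) < 1 + x + y - t := by nlinarith
  -- AM–GM: sqrt(αβxy) ≤ t/2
  have hamgm : Real.sqrt (α * β * x * y) ≤ t / 2 := by
    have h1 : α * β * x * y ≤ (t / 2) ^ 2 := by nlinarith [sq_nonneg (α * x - β * y)]
    calc Real.sqrt (α * β * x * y) ≤ Real.sqrt ((t / 2) ^ 2) := Real.sqrt_le_sqrt h1
      _ = t / 2 := Real.sqrt_sq (by positivity)
  have hB : 1 + x + y + 2 * Real.sqrt (α * β * x * y) ≤ 1 + x + y + t := by linarith
  have hBpos : (0:ℝ) < 1 + x + y + 2 * Real.sqrt (α * β * x * y) := by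
    have := Real.sqrt_nonneg (α * β * x * y); linarith
  have hstep1 : μ * Real.logb 2 (1 + x + y + 2 * Real.sqrt (α * β * x * y))
      ≤ μ * Real.logb 2 (1 + x + y + t) := by
    apply mul_le_mul_of_nonneg_left _ (by linarith : (0:ℝ) ≤ μ)
    exact Real.logb_le_logb_of_le one_lt_two hBpos hB
  rw [htA]
  have hm2c : (0:ℝ) < 1 + x + y - 2 * c := by
    have : 1 + x + y - 2 * c = 2 * (1 - μ) * (1 + x + y) := by rw [hc_def]; ring
    rw [this]
    have h1μ : (0:ℝ) < 1 - μ := by linarith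
    positivity
  have hp2c : (0:ℝ) < 1 + x + y + 2 * c := by linarith
  have hpt : (0:ℝ) < 1 + x + y + t := by linarith
  -- key concavity inequality via log z ≤ z - 1
  have key : (1 - μ) * Real.log (1 + x + y - t) + μ * Real.log (1 + x + y + t)
      ≤ (1 - μ) * Real.log (1 + x + y - 2 * c) + μ * Real.log (1 + x + y + 2 * c) := by
    obtain ⟨a, ha_def⟩ : ∃ a : ℝ, a = (1 + x + y - t) / (1 + x + y - 2 * c) := ⟨_, rfl⟩
    obtain ⟨b, hb_def⟩ : ∃ b : ℝ, b = (1 + x + y + t) / (1 + x + y + 2 * c) := ⟨_, rfl⟩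
    have ha : 0 < a := ha_def ▸ div_pos hAt hm2c
    have hbpos : 0 < b := hb_def ▸ div_pos hpt hp2c
    have hla : Real.log a ≤ a - 1 := Real.log_le_sub_one_of_pos ha
    have hlb : Real.log b ≤ b - 1 := Real.log_le_sub_one_of_pos hbpos
    have e1 : 1 + x + y - 2 * c = 2 * (1 - μ) * (1 + x + y) := by rw [hc_def]; ring
    have e2 : 1 + x + y + 2 * c = 2 * μ * (1 + x + y) := by rw [hc_def]; ring
    have h1μ : (1:ℝ) - μ ≠ 0 := by intro h; linarith [h]
    have hμ0 : μ ≠ 0 := by positivity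
    have hcomb : (1 - μ) * (a - 1) + μ * (b - 1) = 0 := by
      rw [ha_def, hb_def, e1, e2]
      field_simp
      ring
    have hloga : Real.log a = Real.log (1 + x + y - t) - Real.log (1 + x + y - 2 * c) := by
      rw [ha_def]; exact Real.log_div hAt.ne' hm2c.ne'
    have hlogb : Real.log b = Real.log (1 + x + y + t) - Real.log (1 + x + y + 2 * c) := by
      rw [hb_def]; exact Real.log_div hpt.ne' hp2c.ne'
    have h1 : (1 - μ) * (Real.log (1 + x + y - t) - Real.log (1 + x + y - 2 * c))
        ≤ (1 - μ) * (a - 1) := by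
      rw [← hloga]
      exact mul_le_mul_of_nonneg_left hla (by linarith)
    have h2 : μ * (Real.log (1 + x + y + t) - Real.log (1 + x + y + 2 * c))
        ≤ μ * (b - 1) := by
      rw [← hlogb]
      exact mul_le_mul_of_nonneg_left hlb (by linarith)
    linarith [h1, h2, hcomb]
  have hln2 : (0:ℝ) < Real.log 2 := Real.log_pos one_lt_two
  have key2 : (1 - μ) * Real.logb 2 (1 + x + y - t) + μ * Real.logb 2 (1 + x + y + t)
      ≤ (1 - μ) * Real.logb 2 (1 + x + y - 2 * c) + μ * Real.logb 2 (1 + x + y + 2 * c) := by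
    simp only [Real.logb]
    calc (1 - μ) * (Real.log (1 + x + y - t) / Real.log 2)
          + μ * (Real.log (1 + x + y + t) / Real.log 2)
        = ((1 - μ) * Real.log (1 + x + y - t) + μ * Real.log (1 + x + y + t)) / Real.log 2 := by
          ring
      _ ≤ ((1 - μ) * Real.log (1 + x + y - 2 * c) + μ * Real.log (1 + x + y + 2 * c)) / Real.log 2 := by
          gcongr
      _ = (1 - μ) * (Real.log (1 + x + y - 2 * c) / Real.log 2)
          + μ * (Real.log (1 + x + y + 2 * c) / Real.log 2) := by ring
  linarith
end

section
/- Let μ ∈ (1/2, 1) and x, y > 0 satisfy min{x, y} ≥ (μ−1/2)(1+x+y), and set α* = (μ−1/2)(1+x+y)/x, β* = (μ−1/2)(1+x+y)/y, and G(α,β) = (1−μ)·log₂(1+(1−α)x+(1−β)y) + μ·log₂(1+x+y+2√(αβxy)). Then 1+x+y+2√(α*β*xy) = 2μ(1+x+y), 1+(1−α*)x+(1−β*)y = 2(1−μ)(1+x+y), and consequently G(α*,β*) = log₂(1+x+y) + 1 + μ·log₂ μ + (1−μ)·log₂(1−μ). -/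
/-- On the fading region `K₁`, with `α* = (μ−1/2)(1+x+y)/x` and
`β* = (μ−1/2)(1+x+y)/y`, one has `1+x+y+2√(α*β*xy) = 2μ(1+x+y)`,
`1+(1−α*)x+(1−β*)y = 2(1−μ)(1+x+y)`, and hence the maximal Lagrangian value
`G(α*,β*) = log₂(1+x+y) + 1 + μ·log₂ μ + (1−μ)·log₂(1−μ)`. -/
theorem mode3_K1_lagrangian_value
    (μ x y : ℝ) (hμ : μ ∈ Set.Ioo (1/2 : ℝ) 1) (hx : 0 < x) (hy : 0 < y)
    (hK1 : min x y ≥ (μ - 1/2) * (1 + x + y)) :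
    1 + x + y + 2 * Real.sqrt
        ((μ - 1/2) * (1 + x + y) / x * ((μ - 1/2) * (1 + x + y) / y) * x * y)
      = 2 * μ * (1 + x + y)
    ∧ 1 + (1 - (μ - 1/2) * (1 + x + y) / x) * x + (1 - (μ - 1/2) * (1 + x + y) / y) * y
      = 2 * (1 - μ) * (1 + x + y)
    ∧ (1 - μ) * Real.logb 2 (1 + (1 - (μ - 1/2) * (1 + x + y) / x) * x
          + (1 - (μ - 1/2) * (1 + x + y) / y) * y)
        + μ * Real.logb 2 (1 + x + y + 2 * Real.sqrt
          ((μ - 1/2) * (1 + x + y) / x * ((μ - 1/2) * (1 + x + y) / y) * x * y))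
      = Real.logb 2 (1 + x + y) + 1 + μ * Real.logb 2 μ + (1 - μ) * Real.logb 2 (1 - μ) := by
  obtain ⟨hμ1, hμ2⟩ := hμ
  have hS : 0 < 1 + x + y := by linarith
  have hm : 0 ≤ (μ - 1/2) * (1 + x + y) := by nlinarith
  have harg : (μ - 1/2) * (1 + x + y) / x * ((μ - 1/2) * (1 + x + y) / y) * x * y
      = ((μ - 1/2) * (1 + x + y)) ^ 2 := by
    field_simp
  have hsqrt : Real.sqrt ((μ - 1/2) * (1 + x + y) / x * ((μ - 1/2) * (1 + x + y) / y) * x * y)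
      = (μ - 1/2) * (1 + x + y) := by
    rw [harg, Real.sqrt_sq hm]
  have h1 : 1 + x + y + 2 * Real.sqrt
      ((μ - 1/2) * (1 + x + y) / x * ((μ - 1/2) * (1 + x + y) / y) * x * y)
      = 2 * μ * (1 + x + y) := by rw [hsqrt]; ring
  have h2 : 1 + (1 - (μ - 1/2) * (1 + x + y) / x) * x + (1 - (μ - 1/2) * (1 + x + y) / y) * y
      = 2 * (1 - μ) * (1 + x + y) := by field_simp; ring
  refine ⟨h1, h2, ?_⟩
  rw [h1, h2]
  have hμ0 : 0 < μ := by linarith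
  have h1μ : 0 < 1 - μ := by linarith
  have l1 : Real.logb 2 (2 * μ * (1 + x + y))
      = 1 + Real.logb 2 μ + Real.logb 2 (1 + x + y) := by
    rw [Real.logb_mul (by positivity) hS.ne', Real.logb_mul (by norm_num) hμ0.ne',
      Real.logb_self_eq_one one_lt_two]
  have l2 : Real.logb 2 (2 * (1 - μ) * (1 + x + y))
      = 1 + Real.logb 2 (1 - μ) + Real.logb 2 (1 + x + y) := by
    rw [Real.logb_mul (by positivity) hS.ne', Real.logb_mul (by norm_num) h1μ.ne',
      Real.logb_self_eq_one one_lt_two]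
  rw [l1, l2]; ring
end

section
/- Let μ ∈ (1/2, 1) and x, y > 0, and set a₁ = ((2−μ)/μ)·x, b₁ = ((1−μ)/μ)·√(x/y)·(1+x+y), c₁ = 1+x, t = (−b₁ + √(b₁² + 4a₁c₁)) / (2a₁), and α* = t². Then α* > 0 and the stationarity identity μ·√(xy/α*)·(1+(1−α*)x) = (1−μ)·x·(1+x+y+2√(α*xy)) holds; equivalently, the derivative of α ↦ (1−μ)·log₂(1+(1−α)x) + μ·log₂(1+x+y+2√(αxy)) vanishes at α = α* whenever α* < 1. -/
/-!
With `s = √(xy)` and `√(x/y) · s = x`, multiplying the quadratic `a₁t² + b₁t = c₁` by `μ s`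
turns it into `μ s (1 + (1 - t²)x) = (1 - μ) x t (1 + x + y + 2ts)`, which is the stationarity
identity at `α* = t²` because `√(xy/α*) = s/t` and `√(α*xy) = ts`. The derivative of the
objective at `α` is `(μ√(xy/α)/(1 + x + y + 2√(αxy)) - (1 - μ)x/(1 + (1 - α)x)) / log 2`,
which vanishes exactly when the identity holds.
-/

open Real

section PositiveRoot

variable {a b c : ℝ}

theorem quadratic_posRoot_pos (ha : 0 < a) (hc : 0 < c) :
    0 < (-b + √(b ^ 2 + 4 * a * c)) / (2 * a) := by
  have hb : b < √(b ^ 2 + 4 * a * c) :=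
    (le_abs_self b).trans_lt <| by
      rw [← sqrt_sq_eq_abs]
      exact sqrt_lt_sqrt (sq_nonneg b) (by linarith [mul_pos ha hc])
  exact div_pos (by linarith) (by linarith)

theorem quadratic_posRoot_eq (ha : 0 < a) (hc : 0 < c) :
    a * ((-b + √(b ^ 2 + 4 * a * c)) / (2 * a)) ^ 2
      + b * ((-b + √(b ^ 2 + 4 * a * c)) / (2 * a)) = c := by
  have hdisc : discrim a b (-c) = √(b ^ 2 + 4 * a * c) * √(b ^ 2 + 4 * a * c) := by
    rw [mul_self_sqrt (by nlinarith [sq_nonneg b]), discrim]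
    ring
  linear_combination (quadratic_eq_zero_iff ha.ne' hdisc _).mpr (Or.inl rfl)

end PositiveRoot

theorem mode3_stationarity_of_sq_root {μ x y t : ℝ} (hμ : 0 < μ) (hx : 0 < x) (hy : 0 < y)
    (ht : 0 < t)
    (hq : (2 - μ) / μ * x * t ^ 2 + (1 - μ) / μ * √(x / y) * (1 + x + y) * t = 1 + x) :
    μ * √(x * y / t ^ 2) * (1 + (1 - t ^ 2) * x)
      = (1 - μ) * x * (1 + x + y + 2 * √(t ^ 2 * x * y)) := by
  have hS : √(x / y) * √(x * y) = x := by
    rw [← sqrt_mul (div_nonneg hx.le hy.le), show x / y * (x * y) = x ^ 2 by field_simp,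
      sqrt_sq hx.le]
  rw [sqrt_div' _ (sq_nonneg t), mul_assoc (t ^ 2), sqrt_mul (sq_nonneg t), sqrt_sq ht.le]
  field_simp at hq ⊢
  linear_combination (-√(x * y)) * hq + ((1 - μ) * (1 + x + y) * t) * hS

theorem hasDerivAt_mode3_objective {μ x y α : ℝ} (hx : 0 < x) (hy : 0 < y) (hα : 0 < α)
    (hα1 : 0 < 1 + (1 - α) * x) :
    HasDerivAt
      (fun a : ℝ =>
        (1 - μ) * logb 2 (1 + (1 - a) * x) + μ * logb 2 (1 + x + y + 2 * √(a * x * y)))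
      ((μ * √(x * y / α) / (1 + x + y + 2 * √(α * x * y))
        - (1 - μ) * x / (1 + (1 - α) * x)) / log 2) α := by
  have hαxy : 0 < α * x * y := by positivity
  have hD : 0 < 1 + x + y + 2 * √(α * x * y) := by positivity
  have hP : HasDerivAt (fun a : ℝ => 1 + (1 - a) * x) (-x) α := by
    simpa using (((hasDerivAt_id α).const_sub 1).mul_const x).const_add 1
  have hQ : HasDerivAt (fun a : ℝ => 1 + x + y + 2 * √(a * x * y))
      (2 * (x * y / (2 * √(α * x * y)))) α := by
    have hL : HasDerivAt (fun a : ℝ => a * x * y) (x * y) α := by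
      simpa using ((hasDerivAt_id α).mul_const x).mul_const y
    exact ((hL.sqrt hαxy.ne').const_mul 2).const_add _
  have hxyα : x * y / √(α * x * y) = √(x * y / α) := by
    rw [show α * x * y = α * (x * y) by ring, sqrt_mul hα.le, sqrt_div' _ hα.le]
    field_simp
    rw [sq_sqrt (by positivity)]
  refine ((((hP.log hα1.ne').div_const (log 2)).const_mul (1 - μ)).add
    (((hQ.log hD.ne').div_const (log 2)).const_mul μ)).congr_deriv ?_
  rw [← hxyα]
  field_simp
  ring

/-- For `μ ∈ (1/2,1)` and `x, y > 0`, the value `α* = t²` with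
`t = (−b₁+√(b₁²+4a₁c₁))/(2a₁)` (where `a₁ = ((2−μ)/μ)x`,
`b₁ = ((1−μ)/μ)√(x/y)(1+x+y)`, `c₁ = 1+x`) is positive and satisfies the
stationarity identity `μ√(xy/α*)(1+(1−α*)x) = (1−μ)x(1+x+y+2√(α*xy))`;
equivalently, the derivative of
`α ↦ (1−μ)·log₂(1+(1−α)x) + μ·log₂(1+x+y+2√(αxy))` vanishes at `α*`
whenever `α* < 1`. -/
theorem mode3_K3_stationarity
    (μ x y : ℝ) (hμ : μ ∈ Set.Ioo (1/2 : ℝ) 1) (hx : 0 < x) (hy : 0 < y) :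
    let a₁ : ℝ := (2 - μ) / μ * x
    let b₁ : ℝ := (1 - μ) / μ * Real.sqrt (x / y) * (1 + x + y)
    let c₁ : ℝ := 1 + x
    let t : ℝ := (-b₁ + Real.sqrt (b₁ ^ 2 + 4 * a₁ * c₁)) / (2 * a₁)
    let αstar : ℝ := t ^ 2
    0 < αstar
    ∧ μ * Real.sqrt (x * y / αstar) * (1 + (1 - αstar) * x)
        = (1 - μ) * x * (1 + x + y + 2 * Real.sqrt (αstar * x * y))
    ∧ (αstar < 1 →
        HasDerivAt
          (fun a : ℝ =>
            (1 - μ) * Real.logb 2 (1 + (1 - a) * x)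
              + μ * Real.logb 2 (1 + x + y + 2 * Real.sqrt (a * x * y)))
          0 αstar) := by
  intro a₁ b₁ c₁ t αstar
  obtain ⟨hμ₀, hμ₁⟩ := hμ
  have ha : 0 < a₁ := mul_pos (div_pos (by linarith) (by linarith)) hx
  have hc : 0 < c₁ := by positivity
  have ht : 0 < t := quadratic_posRoot_pos ha hc
  have hstat := mode3_stationarity_of_sq_root (by linarith) hx hy ht (quadratic_posRoot_eq ha hc)
  refine ⟨by positivity, hstat, fun hlt => ?_⟩
  have hP : 0 < 1 + (1 - αstar) * x := by nlinarith
  have hD : 0 < 1 + x + y + 2 * √(αstar * x * y) := by positivity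
  refine (hasDerivAt_mode3_objective hx hy (by positivity) hP).congr_deriv ?_
  rw [div_eq_zero_iff, sub_eq_zero, div_eq_div_iff hD.ne' hP.ne']
  exact Or.inl (by linear_combination hstat)
end

section
/- Let μ ∈ (1/2, 1) and x, y > 0 satisfy √(y/x) ≤ ((1−μ)/μ)·(1+(√x+√y)²), and set a₁ = ((2−μ)/μ)·x, b₁ = ((1−μ)/μ)·√(x/y)·(1+x+y), c₁ = 1+x, and t = (−b₁ + √(b₁² + 4a₁c₁)) / (2a₁). Then a₁ + b₁ ≥ c₁, and consequently t ≤ 1. -/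
/-!
With `k = (1 - μ)/μ` one has `a₁ = x + 2 k x`, so `a₁ + b₁ ≥ c₁` reads `1 ≤ b₁ + 2 k x`. Multiplying
the hypothesis by `√(x/y) = 1/√(y/x)` gives exactly this, because
`√(x/y) (1 + (√x + √y)²) = √(x/y) (1 + x + y) + 2x`. Finally `a₁ + b₁ ≥ c₁` gives
`b₁² + 4a₁c₁ ≤ (2a₁ + b₁)²`, which places the positive root `t` of `a₁t² + b₁t = c₁` below `1`.
-/

open Real

theorem quadratic_root_le_one {a b c : ℝ} (ha : 0 < a) (hb : 0 ≤ 2 * a + b) (habc : c ≤ a + b) :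
    (-b + √(b ^ 2 + 4 * a * c)) / (2 * a) ≤ 1 := by
  have hdisc : √(b ^ 2 + 4 * a * c) ≤ 2 * a + b :=
    (sqrt_le_left hb).mpr (by nlinarith)
  rw [div_le_one (by positivity)]
  linarith

theorem sqrt_div_mul_sqrt_mul_sqrt {x y : ℝ} (hx : 0 ≤ x) (hy : 0 < y) :
    √(x / y) * √x * √y = x := by
  rw [sqrt_div hx, div_mul_eq_mul_div, div_mul_cancel₀ _ (sqrt_pos.mpr hy).ne', mul_self_sqrt hx]

theorem one_le_of_sqrt_div_le {k x y : ℝ} (hx : 0 < x) (hy : 0 < y)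
    (h : √(y / x) ≤ k * (1 + (√x + √y) ^ 2)) :
    1 ≤ k * √(x / y) * (1 + x + y) + 2 * k * x := by
  have hinv : √(x / y) * √(y / x) = 1 := by
    rw [← sqrt_mul (div_pos hx hy).le, div_mul_div_comm, mul_comm x y, div_self (by positivity), sqrt_one]
  calc (1 : ℝ) = √(x / y) * √(y / x) := hinv.symm
    _ ≤ √(x / y) * (k * (1 + (√x + √y) ^ 2)) := mul_le_mul_of_nonneg_left h (sqrt_nonneg _)
    _ = k * √(x / y) * (1 + x + y) + 2 * k * (√(x / y) * √x * √y) := by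
      rw [add_sq, sq_sqrt hx.le, sq_sqrt hy.le]; ring
    _ = k * √(x / y) * (1 + x + y) + 2 * k * x := by rw [sqrt_div_mul_sqrt_mul_sqrt hx.le hy]

/-- Under the region-`K₃` condition `√(y/x) ≤ ((1−μ)/μ)(1+(√x+√y)²)`, the
quadratic-formula value `t = (−b₁+√(b₁²+4a₁c₁))/(2a₁)` of Case 8 satisfies
`a₁ + b₁ ≥ c₁` and consequently `t ≤ 1`. -/
theorem mode3_K3_feasibility
    (μ x y : ℝ) (hμ : μ ∈ Set.Ioo (1/2 : ℝ) 1) (hx : 0 < x) (hy : 0 < y)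
    (hcond : Real.sqrt (y / x)
      ≤ (1 - μ) / μ * (1 + (Real.sqrt x + Real.sqrt y) ^ 2)) :
    let a₁ : ℝ := (2 - μ) / μ * x
    let b₁ : ℝ := (1 - μ) / μ * Real.sqrt (x / y) * (1 + x + y)
    let c₁ : ℝ := 1 + x
    let t : ℝ := (-b₁ + Real.sqrt (b₁ ^ 2 + 4 * a₁ * c₁)) / (2 * a₁)
    a₁ + b₁ ≥ c₁ ∧ t ≤ 1 := by
  intro a₁ b₁ c₁ t
  obtain ⟨hμ_gt, hμ_lt⟩ := hμ
  have hμ_pos : 0 < μ := by linarith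
  have ha₁ : a₁ = x + 2 * ((1 - μ) / μ) * x := by
    simp only [a₁]; field_simp; ring
  have ha₁_pos : 0 < a₁ := mul_pos (div_pos (by linarith) hμ_pos) hx
  have hb₁_nonneg : 0 ≤ b₁ := by
    have : 0 ≤ (1 - μ) / μ := div_nonneg (by linarith) hμ_pos.le
    positivity
  have hfeas : a₁ + b₁ ≥ c₁ := by
    have := one_le_of_sqrt_div_le hx hy hcond
    simp only [c₁]; linarith
  exact ⟨hfeas, quadratic_root_le_one ha₁_pos (by linarith) hfeas⟩
end

section
/- Let μ ∈ (1/2, 1) and x, y > 0 satisfy √(y/x) ≤ ((1−μ)/μ)·(1+(√x+√y)²). Set a₁ = ((2−μ)/μ)·x, b₁ = ((1−μ)/μ)·√(x/y)·(1+x+y), c₁ = 1+x, t = (−b₁ + √(b₁² + 4a₁c₁)) / (2a₁), α* = t², and g(α) = (1−μ)·log₂(1+(1−α)x) + μ·log₂(1+x+y+2√(αxy)) for α ∈ [0,1]. Then α* ∈ (0,1] and g(α) ≤ g(α*) for all α ∈ [0,1]. -/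
/-!
Write `x = u²`, `y = v²` and `α = s²`. The objective becomes
`φ(s) = (1-μ) log₂(1 + (1-s²)x) + μ log₂(1 + x + y + 2suv)`, concave in `s`. The quadratic
`a₁t² + b₁t = c₁` solved by `t` is the stationarity condition `φ'(t) = 0`, and the region
condition `K₃` says `c₁ ≤ a₁ + b₁`, i.e. `t ≤ 1`. The tangent-line bound
`log a ≤ log a' + (a - a')/a'` at `s = t` then gives
`φ(s) ≤ φ(t) - (1-μ)x(s-t)² / ((1 + (1-t²)x) log 2)`.
-/

open Real

lemma Real.log_le_log_add_sub_div {a a' : ℝ} (ha : 0 < a) (ha' : 0 < a') :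
    log a ≤ log a' + (a - a') / a' := by
  have h := log_le_sub_one_of_pos (div_pos ha ha')
  rw [log_div ha.ne' ha'.ne'] at h
  rw [sub_div, div_self ha'.ne']
  linarith

lemma weighted_logb_le_of_tangent_nonpos {b p q A B A' B' : ℝ} (hb : 1 < b)
    (hp : 0 ≤ p) (hq : 0 ≤ q) (hA : 0 < A) (hB : 0 < B) (hA' : 0 < A') (hB' : 0 < B')
    (htangent : p * ((A - A') / A') + q * ((B - B') / B') ≤ 0) :
    p * logb b A + q * logb b B ≤ p * logb b A' + q * logb b B' := by
  have hlog : p * log A + q * log B ≤ p * log A' + q * log B' := by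
    nlinarith [mul_le_mul_of_nonneg_left (log_le_log_add_sub_div hA hA') hp,
      mul_le_mul_of_nonneg_left (log_le_log_add_sub_div hB hB') hq]
  simp only [logb, mul_div_assoc', ← add_div]
  exact div_le_div_of_nonneg_right hlog (log_pos hb).le

/-- The positive root of `a X² + b X - c` when `a > 0` and `c > 0`. -/
noncomputable def quadPosRoot (a b c : ℝ) : ℝ := (-b + √(b ^ 2 + 4 * a * c)) / (2 * a)

section quadPosRoot

variable {a b c : ℝ}

lemma quadPosRoot_eq (ha : 0 < a) (hc : 0 ≤ c) :
    a * quadPosRoot a b c ^ 2 + b * quadPosRoot a b c = c := by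
  have hdiscrim : discrim a b (-c) = √(b ^ 2 + 4 * a * c) * √(b ^ 2 + 4 * a * c) := by
    rw [mul_self_sqrt (by positivity), discrim]
    ring
  have h := (quadratic_eq_zero_iff ha.ne' hdiscrim _).2 (Or.inl rfl)
  rw [← quadPosRoot] at h
  linear_combination h

lemma quadPosRoot_pos (ha : 0 < a) (hc : 0 < c) : 0 < quadPosRoot a b c := by
  have hb : b < √(b ^ 2 + 4 * a * c) :=
    calc b ≤ |b| := le_abs_self b
      _ = √(b ^ 2) := (sqrt_sq_eq_abs b).symm
      _ < √(b ^ 2 + 4 * a * c) := sqrt_lt_sqrt (sq_nonneg b) (by linarith [mul_pos ha hc])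
  exact div_pos (by linarith) (by linarith)

lemma quadPosRoot_le_one (ha : 0 < a) (hb : 0 ≤ b) (hc : 0 ≤ c) (h : c ≤ a + b) :
    quadPosRoot a b c ≤ 1 := by
  by_contra! h1
  have hsq : 1 < quadPosRoot a b c ^ 2 := one_lt_pow₀ h1 two_ne_zero
  nlinarith [quadPosRoot_eq (b := b) ha hc, mul_lt_mul_of_pos_left hsq ha,
    mul_le_mul_of_nonneg_left h1.le hb]

end quadPosRoot

lemma logb_objective_le_of_stationary {b p q x w c s t : ℝ} (hb : 1 < b) (hp : 0 ≤ p)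
    (hq : 0 ≤ q) (hx : 0 ≤ x) (hw : 0 ≤ w) (hc : 0 < c) (hs : s ∈ Set.Icc (0 : ℝ) 1)
    (ht : t ∈ Set.Icc (0 : ℝ) 1)
    (hstat : p * x * t * (c + 2 * (t * w)) = q * w * (1 + (1 - t ^ 2) * x)) :
    p * logb b (1 + (1 - s ^ 2) * x) + q * logb b (c + 2 * (s * w))
      ≤ p * logb b (1 + (1 - t ^ 2) * x) + q * logb b (c + 2 * (t * w)) := by
  obtain ⟨hs0, hs1⟩ := hs
  obtain ⟨ht0, ht1⟩ := ht
  have hA : ∀ r, 0 ≤ r → r ≤ 1 → 0 < 1 + (1 - r ^ 2) * x := fun r hr0 hr1 => by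
    nlinarith [mul_nonneg (mul_nonneg hr0 (sub_nonneg.2 hr1)) hx]
  have hB : ∀ r, 0 ≤ r → 0 < c + 2 * (r * w) := fun r hr0 => by positivity
  refine weighted_logb_le_of_tangent_nonpos hb hp hq (hA s hs0 hs1) (hB s hs0)
    (hA t ht0 ht1) (hB t ht0) ?_
  have hA' := hA t ht0 ht1
  have hB' := hB t ht0
  set A' := 1 + (1 - t ^ 2) * x
  set B' := c + 2 * (t * w)
  have htangent : p * ((1 + (1 - s ^ 2) * x - A') / A') + q * ((c + 2 * (s * w) - B') / B')
      = -(p * x * (s - t) ^ 2 / A') := by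
    field_simp
    linear_combination 2 * (t - s) * hstat
  rw [htangent, neg_nonpos]
  positivity

lemma mode3_stationary_of_root {μ u v t : ℝ} (hμ : μ ≠ 0) (hv : v ≠ 0)
    (hroot : (2 - μ) / μ * u ^ 2 * t ^ 2 + (1 - μ) / μ * (u / v) * (1 + u ^ 2 + v ^ 2) * t
      = 1 + u ^ 2) :
    (1 - μ) * u ^ 2 * t * (1 + u ^ 2 + v ^ 2 + 2 * (t * (u * v)))
      = μ * (u * v) * (1 + (1 - t ^ 2) * u ^ 2) := by
  field_simp at hroot
  linear_combination u * hroot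

lemma mode3_c₁_le_a₁_add_b₁_of_K₃ {μ u v : ℝ} (hμ : 0 < μ) (hu : 0 < u) (hv : 0 < v)
    (hK₃ : v / u ≤ (1 - μ) / μ * (1 + (u + v) ^ 2)) :
    1 + u ^ 2 ≤ (2 - μ) / μ * u ^ 2 + (1 - μ) / μ * (u / v) * (1 + u ^ 2 + v ^ 2) := by
  rw [div_le_iff₀ hu] at hK₃
  field_simp at hK₃ ⊢
  linear_combination hK₃

/-- On the fading region `K₃` (condition `√(y/x) ≤ ((1−μ)/μ)(1+(√x+√y)²)`),
the power fraction `α* = t²` with `t = (−b₁+√(b₁²+4a₁c₁))/(2a₁)` lies in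
`(0,1]` and maximizes over `[0,1]` the mode-3 Lagrangian objective at `β = 1`,
`g(α) = (1−μ)·log₂(1+(1−α)x) + μ·log₂(1+x+y+2√(αxy))`. -/
theorem mode3_K3_optimal_power_sharing
    (μ x y : ℝ) (hμ : μ ∈ Set.Ioo (1/2 : ℝ) 1) (hx : 0 < x) (hy : 0 < y)
    (hcond : Real.sqrt (y / x)
      ≤ (1 - μ) / μ * (1 + (Real.sqrt x + Real.sqrt y) ^ 2)) :
    let a₁ : ℝ := (2 - μ) / μ * x
    let b₁ : ℝ := (1 - μ) / μ * Real.sqrt (x / y) * (1 + x + y)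
    let c₁ : ℝ := 1 + x
    let t : ℝ := (-b₁ + Real.sqrt (b₁ ^ 2 + 4 * a₁ * c₁)) / (2 * a₁)
    let αstar : ℝ := t ^ 2
    αstar ∈ Set.Ioc (0:ℝ) 1 ∧
      ∀ α ∈ Set.Icc (0:ℝ) 1,
        (1 - μ) * Real.logb 2 (1 + (1 - α) * x)
            + μ * Real.logb 2 (1 + x + y + 2 * Real.sqrt (α * x * y))
          ≤ (1 - μ) * Real.logb 2 (1 + (1 - αstar) * x)
            + μ * Real.logb 2 (1 + x + y + 2 * Real.sqrt (αstar * x * y)) := by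
  obtain ⟨hμ_half, hμ1⟩ := hμ
  have hμ0 : 0 < μ := by linarith
  obtain ⟨u, hu, rfl⟩ : ∃ u, 0 < u ∧ u ^ 2 = x := ⟨√x, sqrt_pos.2 hx, sq_sqrt hx.le⟩
  obtain ⟨v, hv, rfl⟩ : ∃ v, 0 < v ∧ v ^ 2 = y := ⟨√y, sqrt_pos.2 hy, sq_sqrt hy.le⟩
  have hsqrt_div : ∀ {a b : ℝ}, 0 < a → 0 < b → √(a ^ 2 / b ^ 2) = a / b := fun ha hb => by
    rw [← div_pow, sqrt_sq (div_pos ha hb).le]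
  have hsqrt_mul : ∀ {s : ℝ}, 0 ≤ s → √(s ^ 2 * u ^ 2 * v ^ 2) = s * (u * v) := fun hs => by
    rw [← mul_pow, ← mul_pow, sqrt_sq (by positivity), mul_assoc]
  rw [hsqrt_div hv hu, sqrt_sq hu.le, sqrt_sq hv.le] at hcond
  intro a₁ b₁ c₁ t αstar
  have ha₁ : 0 < a₁ := by simp only [a₁]; bound
  have hb₁ : b₁ = (1 - μ) / μ * (u / v) * (1 + u ^ 2 + v ^ 2) := by simp only [b₁, hsqrt_div hu hv]
  have hroot : a₁ * t ^ 2 + b₁ * t = c₁ := quadPosRoot_eq ha₁ (by positivity)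
  have ht0 : 0 < t := quadPosRoot_pos ha₁ (by positivity)
  have ht1 : t ≤ 1 := quadPosRoot_le_one ha₁ (by rw [hb₁]; bound) (by positivity)
    (by rw [hb₁]; exact mode3_c₁_le_a₁_add_b₁_of_K₃ hμ0 hu hv hcond)
  have hstat := mode3_stationary_of_root hμ0.ne' hv.ne' (hb₁ ▸ hroot)
  refine ⟨⟨by positivity, pow_le_one₀ ht0.le ht1⟩, fun α hα => ?_⟩
  obtain ⟨s, hs, rfl⟩ : ∃ s ∈ Set.Icc (0 : ℝ) 1, s ^ 2 = α :=
    ⟨√α, ⟨sqrt_nonneg α, sqrt_le_one.2 hα.2⟩, sq_sqrt hα.1⟩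
  rw [hsqrt_mul hs.1, hsqrt_mul ht0.le]
  exact logb_objective_le_of_stationary one_lt_two (by linarith) hμ0.le (by positivity)
    (by positivity) (by positivity) hs ⟨ht0.le, ht1⟩ hstat
end

section
/- Let μ ∈ (1/2, 1). There is no pair x, y > 0 satisfying simultaneously √(y/x) < ((1−μ)/μ)·(1+(√x+√y)²), y < (μ−1/2)(1+x+y), √(x/y) < ((1−μ)/μ)·(1+(√x+√y)²), and x ≤ (μ−1/2)(1+x+y). In other words, the fading regions K₃ and K₄ are disjoint. -/
/-- For `μ ∈ (1/2,1)`, the fading regions `K₃` and `K₄` are disjoint: no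
`x, y > 0` satisfy simultaneously `√(y/x) < ((1−μ)/μ)(1+(√x+√y)²)`,
`y < (μ−1/2)(1+x+y)`, `√(x/y) < ((1−μ)/μ)(1+(√x+√y)²)`, and
`x ≤ (μ−1/2)(1+x+y)`. -/
theorem K3_K4_disjoint (μ : ℝ) (hμ : μ ∈ Set.Ioo (1/2 : ℝ) 1) :
    ¬ ∃ x y : ℝ, 0 < x ∧ 0 < y
      ∧ Real.sqrt (y / x) < (1 - μ) / μ * (1 + (Real.sqrt x + Real.sqrt y) ^ 2)
      ∧ y < (μ - 1/2) * (1 + x + y)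
      ∧ Real.sqrt (x / y) < (1 - μ) / μ * (1 + (Real.sqrt x + Real.sqrt y) ^ 2)
      ∧ x ≤ (μ - 1/2) * (1 + x + y) := by
  rintro ⟨x, y, hx, hy, h1, h2, h3, h4⟩
  obtain ⟨hμ1, hμ2⟩ := hμ
  have hμpos : (0:ℝ) < μ := by linarith
  have hsx := Real.sq_sqrt hx.le
  have hsy := Real.sq_sqrt hy.le
  have hnx := Real.sqrt_nonneg x
  have hny := Real.sqrt_nonneg y
  have key : 1 < (1 - μ) / μ * (1 + (Real.sqrt x + Real.sqrt y) ^ 2) := by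
    rcases le_total x y with hxy | hxy
    · refine lt_of_le_of_lt ?_ h1
      rw [Real.one_le_sqrt]
      exact (one_le_div hx).mpr hxy
    · refine lt_of_le_of_lt ?_ h3
      rw [Real.one_le_sqrt]
      exact (one_le_div hy).mpr hxy
  rw [div_mul_eq_mul_div, lt_div_iff₀ hμpos] at key
  nlinarith [sq_nonneg (Real.sqrt x - Real.sqrt y), key, h2, h4]
end
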